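/- Let p ≥ 0 and let (X,d) be a metric space. Then (X,d) has strict p-negative type if and only if (X,d) has strict generalized roundness p. -/

import Mathlib

/-!
Loading the vertices of a normalized `(s,t)`-simplex with the weights `m` on the `a`'s and `-n`
on the `b`'s gives a nonzero zero-sum load whose quadratic form
`∑ᵢⱼ d(xᵢ,xⱼ)^p ηᵢ ηⱼ` equals `-2` times the simplex gap. Conversely, a nonzero zero-sum load `η`
splits by sign into such a simplex: with `M` the total positive weight, `η / M` is the load of a
normalized simplex, so the quadratic form of `η` is `-2 M²` times its gap.
-/

open scoped BigOperators

/-- The kernel `d(x,y)^p`, with the convention that it vanishes on the diagonal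
(this matters only when `p = 0`). -/
noncomputable def negKer {X : Type*} [MetricSpace X] (p : ℝ) (x y : X) : ℝ :=
  @ite ℝ (x = y) (Classical.dec _) 0 (dist x y ^ p)

/-- `(X,d)` has `p`-negative type: for all `k ≥ 2`, pairwise distinct points
`x₁,…,x_k` and reals `η₁,…,η_k` summing to zero,
`∑_{i,j} d(xᵢ,xⱼ)^p ηᵢ ηⱼ ≤ 0`. -/
def HasNegType (X : Type*) [MetricSpace X] (p : ℝ) : Prop :=
  ∀ (k : ℕ), 2 ≤ k → ∀ (x : Fin k → X), Function.Injective x →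
    ∀ (η : Fin k → ℝ), (∑ i, η i) = 0 →
      (∑ i, ∑ j, negKer p (x i) (x j) * η i * η j) ≤ 0

/-- `(X,d)` has strict `p`-negative type: `p`-negative type, with strict
inequality whenever `η ≠ 0`. -/
def HasStrictNegType (X : Type*) [MetricSpace X] (p : ℝ) : Prop :=
  HasNegType X p ∧
  ∀ (k : ℕ), 2 ≤ k → ∀ (x : Fin k → X), Function.Injective x →
    ∀ (η : Fin k → ℝ), (∑ i, η i) = 0 → η ≠ 0 →
      (∑ i, ∑ j, negKer p (x i) (x j) * η i * η j) < 0

/-- A normalized `(s,t)`-simplex in `X`: `s+t` pairwise distinct points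
`a₁,…,a_s,b₁,…,b_t` with positive weights `m`, `n`, each family summing to `1`. -/
structure IsNormSimplex {X : Type*} [MetricSpace X] {s t : ℕ}
    (a : Fin s → X) (b : Fin t → X) (m : Fin s → ℝ) (n : Fin t → ℝ) : Prop where
  inj_a : Function.Injective a
  inj_b : Function.Injective b
  disj : ∀ j i, a j ≠ b i
  m_pos : ∀ j, 0 < m j
  n_pos : ∀ i, 0 < n i
  m_sum : (∑ j, m j) = 1
  n_sum : (∑ i, n i) = 1

/-- The `p`-negative type simplex gap `γ_D^p(ω)` of a loaded `(s,t)`-simplex. -/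
noncomputable def simplexGap {X : Type*} [MetricSpace X] (p : ℝ) {s t : ℕ}
    (a : Fin s → X) (b : Fin t → X) (m : Fin s → ℝ) (n : Fin t → ℝ) : ℝ :=
  (∑ j, ∑ i, m j * n i * dist (a j) (b i) ^ p)
    - (∑ j₁, ∑ j₂, if j₁ < j₂ then m j₁ * m j₂ * dist (a j₁) (a j₂) ^ p else 0)
    - (∑ i₁, ∑ i₂, if i₁ < i₂ then n i₁ * n i₂ * dist (b i₁) (b i₂) ^ p else 0)

/-- `(X,d)` has generalized roundness `p`. -/
def HasGenRoundness (X : Type*) [MetricSpace X] (p : ℝ) : Prop :=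
  ∀ (s t : ℕ) (a : Fin s → X) (b : Fin t → X) (m : Fin s → ℝ) (n : Fin t → ℝ),
    IsNormSimplex a b m n → 0 ≤ simplexGap p a b m n

/-- `(X,d)` has strict generalized roundness `p`. -/
def HasStrictGenRoundness (X : Type*) [MetricSpace X] (p : ℝ) : Prop :=
  ∀ (s t : ℕ) (a : Fin s → X) (b : Fin t → X) (m : Fin s → ℝ) (n : Fin t → ℝ),
    IsNormSimplex a b m n → 0 < simplexGap p a b m n

open Function

section SymmetricSum

variable {ι M : Type*} [Fintype ι] [LinearOrder ι] [AddCommMonoid M]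

lemma sum_sum_eq_two_nsmul_sum_sum_ite_lt {g : ι → ι → M} (hdiag : ∀ i, g i i = 0)
    (hsymm : ∀ i j, g i j = g j i) :
    ∑ i, ∑ j, g i j = 2 • ∑ i, ∑ j, if i < j then g i j else 0 := by
  have hsplit : ∀ i j, g i j = (if i < j then g i j else 0) + (if j < i then g j i else 0) := by
    intro i j
    rcases lt_trichotomy i j with h | rfl | h
    · simp [h, h.not_gt]
    · simp [hdiag]
    · simp [h, h.not_gt, hsymm i j]
  calc ∑ i, ∑ j, g i j
      = ∑ i, ∑ j, ((if i < j then g i j else 0) + if j < i then g j i else 0) :=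
        Finset.sum_congr rfl fun i _ => Finset.sum_congr rfl fun j _ => hsplit i j
    _ = _ := by
      simp only [two_nsmul, Finset.sum_add_distrib]
      rw [Finset.sum_comm (f := fun i j => if j < i then g j i else 0)]

end SymmetricSum

section NegTypeForm

variable {X : Type*} [MetricSpace X] (p : ℝ)

lemma negKer_self (x : X) : negKer p x x = 0 := if_pos rfl

lemma negKer_of_ne {x y : X} (h : x ≠ y) : negKer p x y = dist x y ^ p := if_neg h

lemma negKer_comm (x y : X) : negKer p x y = negKer p y x := by
  rcases eq_or_ne x y with rfl | h
  · rfl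
  · rw [negKer_of_ne p h, negKer_of_ne p h.symm, dist_comm]

noncomputable def negTypeForm {ι : Type*} [Fintype ι] (x : ι → X) (η : ι → ℝ) : ℝ :=
  ∑ i, ∑ j, negKer p (x i) (x j) * η i * η j

variable {ι κ : Type*} [Fintype ι] [Fintype κ]

lemma negTypeForm_comp_of_injective {e : κ → ι} (he : Injective e) (x : ι → X) {η : ι → ℝ}
    (hη : ∀ i ∉ Set.range e, η i = 0) :
    negTypeForm p (x ∘ e) (η ∘ e) = negTypeForm p x η := by
  refine Fintype.sum_of_injective e he _ _
    (fun i hi => Finset.sum_eq_zero fun j _ => by rw [hη i hi, mul_zero, zero_mul]) fun _ => ?_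
  exact Fintype.sum_of_injective e he _ _ (fun j hj => by rw [hη j hj, mul_zero]) fun _ => rfl

lemma negTypeForm_smul (x : ι → X) (c : ℝ) (η : ι → ℝ) :
    negTypeForm p x (c • η) = c ^ 2 * negTypeForm p x η := by
  simp only [negTypeForm, Finset.mul_sum, Pi.smul_apply, smul_eq_mul]
  exact Finset.sum_congr rfl fun _ _ => Finset.sum_congr rfl fun _ _ => by ring

lemma negTypeForm_sumElim (a : ι → X) (b : κ → X) (μ : ι → ℝ) (ν : κ → ℝ) :
    negTypeForm p (Sum.elim a b) (Sum.elim μ ν) =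
      negTypeForm p a μ + negTypeForm p b ν + 2 * ∑ j, ∑ i, μ j * ν i * negKer p (a j) (b i) := by
  have hab : ∑ j, ∑ i, negKer p (a j) (b i) * μ j * ν i =
      ∑ j, ∑ i, μ j * ν i * negKer p (a j) (b i) :=
    Finset.sum_congr rfl fun _ _ => Finset.sum_congr rfl fun _ _ => by ring
  have hba : ∑ i, ∑ j, negKer p (b i) (a j) * ν i * μ j =
      ∑ j, ∑ i, μ j * ν i * negKer p (a j) (b i) := by
    rw [Finset.sum_comm]
    exact Finset.sum_congr rfl fun _ _ => Finset.sum_congr rfl fun _ _ => by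
      rw [negKer_comm]; ring
  simp only [negTypeForm, Fintype.sum_sum_type, Sum.elim_inl, Sum.elim_inr,
    Finset.sum_add_distrib, hab, hba]
  ring

lemma negTypeForm_eq_two_mul_sum_ite_lt [LinearOrder ι] {x : ι → X} (hx : Injective x)
    (η : ι → ℝ) :
    negTypeForm p x η = 2 * ∑ i, ∑ j, if i < j then η i * η j * dist (x i) (x j) ^ p else 0 := by
  rw [negTypeForm, sum_sum_eq_two_nsmul_sum_sum_ite_lt
    (fun i => by rw [negKer_self, zero_mul, zero_mul]) (fun i j => by rw [negKer_comm]; ring),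
    nsmul_eq_mul, Nat.cast_ofNat]
  congr 1
  refine Finset.sum_congr rfl fun i _ => Finset.sum_congr rfl fun j _ => ?_
  split_ifs with h
  · rw [negKer_of_ne p (hx.ne h.ne)]; ring
  · rfl

lemma negTypeForm_simplex {s t : ℕ} {a : Fin s → X} {b : Fin t → X}
    (hab : Injective (Sum.elim a b)) (m : Fin s → ℝ) (n : Fin t → ℝ) :
    negTypeForm p (Sum.elim a b) (Sum.elim m (-n)) = -2 * simplexGap p a b m n := by
  have hcross : ∀ j i, negKer p (a j) (b i) = dist (a j) (b i) ^ p := fun j i =>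
    negKer_of_ne p fun h => Sum.inl_ne_inr (hab h)
  have ha : Injective a := hab.comp Sum.inl_injective
  have hb : Injective b := hab.comp Sum.inr_injective
  rw [negTypeForm_sumElim, ← neg_one_smul ℝ n, negTypeForm_smul,
    negTypeForm_eq_two_mul_sum_ite_lt p ha, negTypeForm_eq_two_mul_sum_ite_lt p hb, simplexGap]
  simp only [hcross, Pi.smul_apply, smul_eq_mul, mul_neg, neg_mul, one_mul,
    Finset.sum_neg_distrib]
  ring

end NegTypeForm

lemma exists_injective_sumElim_pos_neg {ι : Type*} [Fintype ι] (η : ι → ℝ) :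
    ∃ (s t : ℕ) (e : Fin s ⊕ Fin t → ι), Injective e ∧ (∀ i ∉ Set.range e, η i = 0) ∧
      (∀ j, 0 < η (e (.inl j))) ∧ ∀ i, η (e (.inr i)) < 0 := by
  classical
  let P := Fintype.equivFin {i // 0 < η i}
  let N := Fintype.equivFin {i // η i < 0}
  refine ⟨_, _, Sum.elim (fun j => (P.symm j : ι)) (fun i => (N.symm i : ι)), ?_,
    fun i hi => ?_, fun j => (P.symm j).2, fun i => (N.symm i).2⟩
  · refine (Subtype.val_injective.comp P.symm.injective).sumElim
      (Subtype.val_injective.comp N.symm.injective) fun j i h => ?_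
    have h' : (P.symm j : ι) = N.symm i := h
    exact lt_asymm (P.symm j).2 (by rw [h']; exact (N.symm i).2)
  · by_contra hη
    rcases lt_or_gt_of_ne hη with hneg | hpos
    · exact hi ⟨.inr (N ⟨i, hneg⟩), by simp⟩
    · exact hi ⟨.inl (P ⟨i, hpos⟩), by simp⟩

section Equivalence

variable {X : Type*} [MetricSpace X] {p : ℝ}

lemma HasStrictNegType.negTypeForm_neg (h : HasStrictNegType X p) {ι : Type*} [Fintype ι]
    (hcard : 2 ≤ Fintype.card ι) {x : ι → X} (hx : Injective x) {η : ι → ℝ}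
    (hsum : ∑ i, η i = 0) (hη : η ≠ 0) : negTypeForm p x η < 0 := by
  set e := (Fintype.equivFin ι).symm
  rw [← negTypeForm_comp_of_injective p e.injective x fun i hi => absurd (e.surjective i) hi]
  refine h.2 _ hcard (x ∘ e) (hx.comp e.injective) (η ∘ e) ((e.sum_comp η).trans hsum) fun h0 => hη ?_
  ext i
  simpa using congrFun h0 (e.symm i)

lemma HasStrictNegType.hasStrictGenRoundness (h : HasStrictNegType X p) :
    HasStrictGenRoundness X p := by
  intro s t a b m n hsim
  have hs : 0 < s := Nat.pos_of_ne_zero fun hs => by subst hs; simpa using hsim.m_sum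
  have ht : 0 < t := Nat.pos_of_ne_zero fun ht => by subst ht; simpa using hsim.n_sum
  have hab : Injective (Sum.elim a b) := hsim.inj_a.sumElim hsim.inj_b hsim.disj
  have hsum : ∑ k, Sum.elim m (-n) k = 0 := by
    simp [Fintype.sum_sum_type, hsim.m_sum, hsim.n_sum]
  have hne : Sum.elim m (-n) ≠ 0 := fun h0 =>
    (hsim.m_pos ⟨0, hs⟩).ne' (congrFun h0 (.inl ⟨0, hs⟩))
  have hneg := h.negTypeForm_neg (by simp; omega) hab hsum hne
  rw [negTypeForm_simplex p hab] at hneg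
  linarith

lemma HasStrictGenRoundness.negTypeForm_sumElim_neg (h : HasStrictGenRoundness X p)
    {s t : ℕ} (hs : 0 < s) {a : Fin s → X} {b : Fin t → X} (hab : Injective (Sum.elim a b))
    {ζ : Fin s ⊕ Fin t → ℝ} (hsum : ∑ k, ζ k = 0) (hpos : ∀ j, 0 < ζ (.inl j))
    (hneg : ∀ i, ζ (.inr i) < 0) :
    negTypeForm p (Sum.elim a b) ζ < 0 := by
  set M := ∑ j, ζ (.inl j)
  have hM : 0 < M := Finset.sum_pos (fun j _ => hpos j) ⟨⟨0, hs⟩, Finset.mem_univ _⟩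
  have hsumN : ∑ i, ζ (.inr i) = -M := by rw [Fintype.sum_sum_type] at hsum; linarith
  set m : Fin s → ℝ := fun j => ζ (.inl j) / M
  set n : Fin t → ℝ := fun i => -ζ (.inr i) / M
  have hsim : IsNormSimplex a b m n :=
    { inj_a := hab.comp Sum.inl_injective
      inj_b := hab.comp Sum.inr_injective
      disj := fun j i h => Sum.inl_ne_inr (hab h)
      m_pos := fun j => div_pos (hpos j) hM
      n_pos := fun i => div_pos (neg_pos.2 (hneg i)) hM
      m_sum := by rw [← Finset.sum_div, div_self hM.ne']
      n_sum := by rw [← Finset.sum_div, Finset.sum_neg_distrib, hsumN, neg_neg, div_self hM.ne'] }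
  have hζ : ζ = M • Sum.elim m (-n) := by
    ext (j | i) <;> simp [m, n, mul_div_cancel₀ _ hM.ne']
  rw [hζ, negTypeForm_smul, negTypeForm_simplex p hab]
  linarith [mul_pos (pow_pos hM 2) (h s t a b m n hsim)]

lemma HasStrictGenRoundness.negTypeForm_neg (h : HasStrictGenRoundness X p) {ι : Type*}
    [Fintype ι] {x : ι → X} (hx : Injective x) {η : ι → ℝ} (hsum : ∑ i, η i = 0)
    (hη : η ≠ 0) : negTypeForm p x η < 0 := by
  obtain ⟨s, t, e, he, hrange, hpos, hneg⟩ := exists_injective_sumElim_pos_neg η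
  obtain ⟨i₀, -, hi₀⟩ := Finset.exists_pos_of_sum_zero_of_exists_nonzero η hsum
    (by simpa using Function.ne_iff.1 hη)
  have hs : 0 < s := by
    obtain ⟨j | j, rfl⟩ : i₀ ∈ Set.range e := not_not.1 (mt (hrange i₀) hi₀.ne')
    · exact j.pos
    · exact absurd hi₀ (hneg j).not_gt
  rw [← negTypeForm_comp_of_injective p he x hrange, ← Sum.elim_comp_inl_inr (x ∘ e)]
  refine h.negTypeForm_sumElim_neg hs (by rw [Sum.elim_comp_inl_inr]; exact hx.comp he) ?_ hpos hneg
  rw [Fintype.sum_of_injective e he (η ∘ e) η hrange fun _ => rfl, hsum]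

lemma HasStrictGenRoundness.hasStrictNegType (h : HasStrictGenRoundness X p) :
    HasStrictNegType X p := by
  refine ⟨fun k _ x hx η hsum => ?_, fun k _ x hx η hsum hη => h.negTypeForm_neg hx hsum hη⟩
  rcases eq_or_ne η 0 with rfl | hη
  · simp
  · exact (h.negTypeForm_neg hx hsum hη).le

end Equivalence

theorem strictNegType_iff_strictGenRoundness_general {X : Type*} [MetricSpace X]
    (p : ℝ) :
    HasStrictNegType X p ↔ HasStrictGenRoundness X p :=
  ⟨HasStrictNegType.hasStrictGenRoundness, HasStrictGenRoundness.hasStrictNegType⟩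

/-- A metric space has strict `p`-negative type iff it has strict generalized
roundness `p`. -/
theorem strictNegType_iff_strictGenRoundness {X : Type*} [MetricSpace X]
    (p : ℝ) (hp : 0 ≤ p) :
    HasStrictNegType X p ↔ HasStrictGenRoundness X p :=
  strictNegType_iff_strictGenRoundness_general p
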